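/- Let G be an abelian group, let S ⊆ G be a generating set of G, and let A be a G-graded ring with grading components (A_g)_{g∈G}. If for every s ∈ S one has A_s · A_{-s} = A_0 and A_{-s} · A_s = A_0, then the grading is strong, i.e. A_g · A_h = A_{g+h} for all g, h ∈ G. -/

import Mathlib

/-!
Pass to the `ℤ`-submodules spanned by the components, whose products are associative.
If `M i * M (-i) = M 0`, then `M (i + j) = M i * M (-i) * M (i + j) ≤ M i * M j`, so every
invertible degree `i` (one with `M i * M (-i) = M 0 = M (-i) * M i`) multiplies strongly.
Consequently the invertible degrees form a subgroup; it contains the generators, hence is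
everything.
-/

open Pointwise

/-- A `G`-grading of a ring `A` by additive subgroups: `A` is the internal direct
sum of the components, `1` lies in the degree-zero component, and the additive
subgroup generated by products of elements of degrees `g` and `h` is contained in
the component of degree `g + h`. -/
structure IsRingGrading {G A : Type*} [AddCommGroup G] [DecidableEq G] [Ring A]
    (𝒜 : G → AddSubgroup A) : Prop where
  isInternal : DirectSum.IsInternal 𝒜
  one_mem : (1 : A) ∈ 𝒜 0
  mul_le : ∀ g h : G,
    AddSubgroup.closure ((𝒜 g : Set A) * (𝒜 h : Set A)) ≤ 𝒜 (g + h)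

namespace Submodule

variable {ι R A : Type*} [AddGroup ι] [CommSemiring R] [Semiring A] [Algebra R A]
  (M : ι → Submodule R A) [SetLike.GradedMonoid M]

theorem mul_le_graded (i j : ι) : M i * M j ≤ M (i + j) :=
  mul_le.mpr fun _ hx _ hy => SetLike.mul_mem_graded hx hy

theorem zero_mul_graded (i : ι) : M 0 * M i = M i := by
  refine le_antisymm ((mul_le_graded M 0 i).trans_eq (by rw [zero_add])) fun x hx => ?_
  simpa using mul_mem_mul (SetLike.one_mem_graded M) hx

theorem mul_zero_graded (i : ι) : M i * M 0 = M i := by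
  refine le_antisymm ((mul_le_graded M i 0).trans_eq (by rw [add_zero])) fun x hx => ?_
  simpa using mul_mem_mul hx (SetLike.one_mem_graded M)

variable {M}

theorem mul_graded_eq_of_mul_neg {i : ι} (hi : M i * M (-i) = M 0) (j : ι) :
    M i * M j = M (i + j) := by
  refine le_antisymm (mul_le_graded M i j) ?_
  calc M (i + j) = M i * M (-i) * M (i + j) := by rw [hi, zero_mul_graded]
    _ = M i * (M (-i) * M (i + j)) := mul_assoc ..
    _ ≤ M i * M j :=
      mul_le_mul_right ((mul_le_graded M _ _).trans_eq (by rw [neg_add_cancel_left])) _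

theorem graded_mul_eq_of_neg_mul {i : ι} (hi : M (-i) * M i = M 0) (j : ι) :
    M j * M i = M (j + i) := by
  refine le_antisymm (mul_le_graded M j i) ?_
  calc M (j + i) = M (j + i) * (M (-i) * M i) := by rw [hi, mul_zero_graded]
    _ = M (j + i) * M (-i) * M i := (mul_assoc ..).symm
    _ ≤ M j * M i :=
      mul_le_mul_left ((mul_le_graded M _ _).trans_eq (by rw [add_neg_cancel_right])) _

variable (M)

def invertibleDegrees : AddSubgroup ι where
  carrier := {i | M i * M (-i) = M 0 ∧ M (-i) * M i = M 0}
  zero_mem' := ⟨by rw [neg_zero, zero_mul_graded], by rw [neg_zero, zero_mul_graded]⟩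
  neg_mem' := fun ⟨h₁, h₂⟩ => ⟨by rwa [neg_neg], by rwa [neg_neg]⟩
  add_mem' := by
    rintro i j ⟨hi, hi'⟩ ⟨hj, hj'⟩
    have hsum : M (i + j) = M i * M j := (mul_graded_eq_of_mul_neg hi j).symm
    have hneg : M (-(i + j)) = M (-j) * M (-i) := by
      rw [neg_add_rev, graded_mul_eq_of_neg_mul (by rwa [neg_neg]) (-j)]
    constructor
    · rw [hsum, hneg, mul_assoc, ← mul_assoc (M j), hj, zero_mul_graded, hi]
    · rw [hsum, hneg, ← mul_assoc, mul_assoc (M (-j)), hi', mul_zero_graded, hj']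

theorem mul_graded_eq_of_closure_eq_top {S : Set ι} (hS : AddSubgroup.closure S = ⊤)
    (hSM : S ⊆ invertibleDegrees M) (i j : ι) : M i * M j = M (i + j) := by
  have hi : i ∈ invertibleDegrees M :=
    (AddSubgroup.closure_le _).mpr hSM (hS ▸ AddSubgroup.mem_top i)
  exact mul_graded_eq_of_mul_neg hi.1 j

end Submodule

theorem AddSubgroup.toIntSubmodule_closure_mul {A : Type*} [Ring A] (P Q : AddSubgroup A) :
    (closure ((P : Set A) * (Q : Set A))).toIntSubmodule = P.toIntSubmodule * Q.toIntSubmodule := by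
  rw [toIntSubmodule_closure, ← Submodule.span_mul_span]
  exact congr_arg₂ (· * ·) P.toIntSubmodule.span_eq Q.toIntSubmodule.span_eq

theorem AddSubgroup.closure_mul_eq_iff {A : Type*} [Ring A] {P Q R : AddSubgroup A} :
    closure ((P : Set A) * (Q : Set A)) = R ↔
      P.toIntSubmodule * Q.toIntSubmodule = R.toIntSubmodule := by
  rw [← toIntSubmodule_closure_mul, toIntSubmodule.injective.eq_iff]

theorem IsRingGrading.gradedMonoid_toIntSubmodule {G A : Type*} [AddCommGroup G] [DecidableEq G]
    [Ring A] {𝒜 : G → AddSubgroup A} (h𝒜 : IsRingGrading 𝒜) :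
    SetLike.GradedMonoid fun g => (𝒜 g).toIntSubmodule where
  one_mem := h𝒜.one_mem
  mul_mem _ _ _ _ hx hy := h𝒜.mul_le _ _ (AddSubgroup.subset_closure (Set.mul_mem_mul hx hy))

/-- To check that a grading is strong, it suffices to check the strongness
condition on a generating set of the grading group. -/
theorem strong_grading_of_generators {G A : Type*}
    [AddCommGroup G] [DecidableEq G] [Ring A]
    (𝒜 : G → AddSubgroup A) (h𝒜 : IsRingGrading 𝒜)
    (S : Set G) (hS : AddSubgroup.closure S = ⊤)
    (hgen : ∀ s ∈ S,
      AddSubgroup.closure ((𝒜 s : Set A) * (𝒜 (-s) : Set A)) = 𝒜 0 ∧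
      AddSubgroup.closure ((𝒜 (-s) : Set A) * (𝒜 s : Set A)) = 𝒜 0) :
    ∀ g h : G,
      AddSubgroup.closure ((𝒜 g : Set A) * (𝒜 h : Set A)) = 𝒜 (g + h) := by
  have := h𝒜.gradedMonoid_toIntSubmodule
  have hSM : S ⊆ Submodule.invertibleDegrees fun g => (𝒜 g).toIntSubmodule := fun s hs =>
    ⟨AddSubgroup.closure_mul_eq_iff.mp (hgen s hs).1,
      AddSubgroup.closure_mul_eq_iff.mp (hgen s hs).2⟩
  exact fun g h => AddSubgroup.closure_mul_eq_iff.mpr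
    (Submodule.mul_graded_eq_of_closure_eq_top _ hS hSM g h)
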